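/- arXiv:1809.09057 — 2 statements merged into one kernel-verified Lean document; each statement's English description precedes it below -/
import Mathlib

section
/- In the time-dependent variational setting described in the context: for every R ≥ R₀ there exists a constant χ(R) > 0, depending only on n, the Tonelli constants of L, C_F, R₀, δ₀, c₀, the Lipschitz constant of u^f, sup_{K₀}|u^f|, and R (in particular independent of T and of the particular coupling c), such that for every t ∈ [0,T], every x ∈ B̄_R, and every minimizer ξ* from (t,x): sup_{s ∈ [t,T]} |ξ*(s)| ≤ χ(R). -/
noncomputable section

open MeasureTheory Metric Set
open scoped RealInnerProductSpace NNReal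

abbrev Euc (n : ℕ) := EuclideanSpace ℝ (Fin n)

/-- A strict Tonelli Lagrangian with constants `C₁ C₂ C₃`:
(a) uniform convexity/boundedness of the second derivative in `v`;
(b) bound on the mixed second derivative `D²_{vx}L`;
(c) bound at `v = 0`. -/
def IsStrictTonelli {n : ℕ} (L : Euc n → Euc n → ℝ) (C₁ C₂ C₃ : ℝ) : Prop :=
  ContDiff ℝ 2 (Function.uncurry L) ∧
  (∀ x v w : Euc n,
      (1 / C₁) * ‖w‖ ^ 2 ≤ iteratedFDeriv ℝ 2 (L x) v ![w, w] ∧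
      iteratedFDeriv ℝ 2 (L x) v ![w, w] ≤ C₁ * ‖w‖ ^ 2) ∧
  (∀ x v : Euc n, ‖fderiv ℝ (fun y => fderiv ℝ (L y) v) x‖ ≤ C₂ * (1 + ‖v‖)) ∧
  (∀ x : Euc n, |L x 0| + ‖fderiv ℝ (fun y => L y 0) x‖ + ‖fderiv ℝ (L x) 0‖ ≤ C₃)

/-- The action `J_t(ξ) = ∫_t^T (L(ξ(s), ξ'(s)) + c(s, ξ(s))) ds + u^f(ξ(T))` of a
(Lipschitz) curve `ξ`, the derivative being taken almost everywhere. -/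
def action {n : ℕ} (L : Euc n → Euc n → ℝ) (c : ℝ → Euc n → ℝ) (uf : Euc n → ℝ)
    (t T : ℝ) (ξ : ℝ → Euc n) : ℝ :=
  (∫ s in t..T, (L (ξ s) (deriv ξ s) + c s (ξ s))) + uf (ξ T)

/-- `ξ` is a minimizer from `(t,x)`: it is Lipschitz, starts at `x` at time `t`, and its
action on `[t,T]` is no greater than that of any Lipschitz curve starting at `x` at time
`t`. -/
def IsMinimizer {n : ℕ} (L : Euc n → Euc n → ℝ) (c : ℝ → Euc n → ℝ) (uf : Euc n → ℝ)
    (t T : ℝ) (x : Euc n) (ξ : ℝ → Euc n) : Prop :=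
  (∃ K : ℝ≥0, LipschitzWith K ξ) ∧ ξ t = x ∧
  ∀ η : ℝ → Euc n, (∃ K : ℝ≥0, LipschitzWith K η) → η t = x →
    action L c uf t T ξ ≤ action L c uf t T η

/-- The uniform well condition: the point `xT ∈ K₀` minimizes `x ↦ L(x,0) + c(s,x)` over
`K₀` at every time `s ∈ [0,T]`, and beats every point outside `K₀` by at least `δ₀`. -/
def WellCondition {n : ℕ} (L : Euc n → Euc n → ℝ) (c : ℝ → Euc n → ℝ)
    (K₀ : Set (Euc n)) (δ₀ T : ℝ) (xT : Euc n) : Prop :=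
  xT ∈ K₀ ∧ ∀ s ∈ Set.Icc (0 : ℝ) T,
    (∀ y ∈ K₀, L xT 0 + c s xT ≤ L y 0 + c s y) ∧
    (∀ y ∉ K₀, L xT 0 + c s xT + δ₀ ≤ L y 0 + c s y)

/-!
Compare a minimizer `ξ` from `(t, x)` with the competitor that moves from `x` straight to the
bottom `xT` of the well during `[t, t + 1]` and rests there afterwards. Measured against the cost
`L(xT, 0) + c(r, xT)` of resting at `xT`, the competitor's excess cost is bounded in terms of `R`
only, hence so is the excess cost of `ξ`, up to the oscillation of `u^f`. Reversibility and
uniform convexity give `L(y, v) ≥ L(y, 0) + |v|² / (2 C₁)`, so by the well condition the excess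
cost is nonnegative and, while `ξ` is outside `K₀`, at least `|ξ'|² / (2 C₁) + δ₀ ≥ |ξ'| / κ`
with `κ = C₁ + 1 / (2 δ₀)`. After the last time `σ ≤ s` at which `ξ` visits `K₀ ⊆ B̄_R` (or
`σ = t`), the length of `ξ` on `[σ, s]` is therefore at most `κ` times that bound.
-/

open Filter intervalIntegral
open scoped Topology

theorem image_zero_le_of_hasDerivAt_nonneg {f f' : ℝ → ℝ} (hf : ∀ τ, HasDerivAt f (f' τ) τ)
    (hf' : ∀ τ, 0 ≤ τ → 0 ≤ f' τ) {τ : ℝ} (hτ : 0 ≤ τ) : f 0 ≤ f τ :=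
  monotoneOn_of_hasDerivWithinAt_nonneg (convex_Ici 0)
    (continuous_iff_continuousAt.2 fun τ => (hf τ).continuousAt).continuousOn
    (fun τ _ => (hf τ).hasDerivWithinAt)
    (fun τ hτ => hf' τ (interior_Ici.subset hτ).out.le) self_mem_Ici hτ hτ

theorem add_half_mul_sq_le_of_le_deriv2 {f p q : ℝ → ℝ} {a τ : ℝ}
    (hf : ∀ τ, HasDerivAt f (p τ) τ) (hp : ∀ τ, HasDerivAt p (q τ) τ) (hp₀ : p 0 = 0)
    (hq : ∀ τ, a ≤ q τ) (hτ : 0 ≤ τ) : f 0 + a / 2 * τ ^ 2 ≤ f τ := by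
  have hpa : ∀ τ, 0 ≤ τ → a * τ ≤ p τ := fun τ hτ => by
    have := image_zero_le_of_hasDerivAt_nonneg (f := fun τ => p τ - a * τ)
      (fun τ => (hp τ).sub ((hasDerivAt_id τ).const_mul a)) (fun τ _ => by simp [hq τ]) hτ
    simp only [hp₀, mul_zero, sub_zero] at this
    linarith
  have := image_zero_le_of_hasDerivAt_nonneg (f := fun τ => f τ - a / 2 * τ ^ 2)
    (fun τ => ((hf τ).sub ((hasDerivAt_pow 2 τ).const_mul (a / 2))).congr_deriv (by ring))
    (fun τ hτ => sub_nonneg.2 (hpa τ hτ)) hτ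
  linarith

theorem Function.Even.deriv_zero {f : ℝ → ℝ} (hf : f.Even) : deriv f 0 = 0 := by
  have h := deriv_comp_neg (f := f) (x := 0)
  rw [show (fun x => f (-x)) = f from funext hf, neg_zero] at h
  linarith

theorem Function.Even.quadratic_bounds {E : Type*} [NormedAddCommGroup E] [NormedSpace ℝ E]
    {f : E → ℝ} (hf : ContDiff ℝ 2 f) (heven : f.Even) {a b : ℝ}
    (hab : ∀ v w : E, a * ‖w‖ ^ 2 ≤ iteratedFDeriv ℝ 2 f v ![w, w] ∧
      iteratedFDeriv ℝ 2 f v ![w, w] ≤ b * ‖w‖ ^ 2) (v : E) :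
    f 0 + a / 2 * ‖v‖ ^ 2 ≤ f v ∧ f v ≤ f 0 + b / 2 * ‖v‖ ^ 2 := by
  have hdf : Differentiable ℝ f := hf.differentiable (by norm_num)
  have hddf : Differentiable ℝ (fderiv ℝ f) :=
    (hf.fderiv_right (m := 1) (by norm_num)).differentiable (by norm_num)
  set p : ℝ → ℝ := fun τ => fderiv ℝ f (τ • v) v
  set q : ℝ → ℝ := fun τ => iteratedFDeriv ℝ 2 f (τ • v) ![v, v]
  have hline : ∀ τ : ℝ, HasDerivAt (fun τ : ℝ => τ • v) v τ := fun τ => by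
    simpa using (hasDerivAt_id τ).smul_const v
  have hg : ∀ τ, HasDerivAt (fun τ : ℝ => f (τ • v)) (p τ) τ := fun τ =>
    (hdf _).hasFDerivAt.comp_hasDerivAt τ (hline τ)
  have hp : ∀ τ, HasDerivAt p (q τ) τ := fun τ => by
    have := ((hddf _).hasFDerivAt.comp_hasDerivAt τ (hline τ)).clm_apply (hasDerivAt_const τ v)
    simpa [q, iteratedFDeriv_two_apply] using this
  have hp₀ : p 0 = 0 := by
    rw [← (hg 0).deriv]
    exact Function.Even.deriv_zero fun τ => by simp only [neg_smul, heven _]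
  have hlow := add_half_mul_sq_le_of_le_deriv2 hg hp hp₀ (fun τ => (hab (τ • v) v).1) zero_le_one
  have hupp := add_half_mul_sq_le_of_le_deriv2 (fun τ => (hg τ).neg) (fun τ => (hp τ).neg)
    (by simp [hp₀]) (fun τ => neg_le_neg (hab (τ • v) v).2) zero_le_one
  simp only [Pi.neg_apply, zero_smul, one_smul] at hlow hupp
  constructor <;> linarith

section LipschitzCurve

variable {E : Type*} [NormedAddCommGroup E] [NormedSpace ℝ E] [CompleteSpace E]
  {K : ℝ≥0} {f : ℝ → E}

theorem LipschitzWith.intervalIntegrable_deriv (hf : LipschitzWith K f) (a b : ℝ) :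
    IntervalIntegrable (deriv f) volume a b :=
  (intervalIntegrable_const (c := (K : ℝ))).mono_fun'
    (stronglyMeasurable_deriv f).aestronglyMeasurable
    (Eventually.of_forall fun _ => norm_deriv_le_of_lipschitz hf)

theorem LipschitzWith.intervalIntegrable_comp_deriv [ProperSpace E] {F : Type*}
    [NormedAddCommGroup F] {L : E → E → F} (hL : Continuous (Function.uncurry L))
    (hf : LipschitzWith K f) (a b : ℝ) :
    IntervalIntegrable (fun r => L (f r) (deriv f r)) volume a b := by
  obtain ⟨M, hM⟩ := ((isCompact_uIcc.image hf.continuous).prod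
    (isCompact_closedBall (0 : E) K)).exists_bound_of_continuousOn hL.continuousOn
  refine (intervalIntegrable_const (c := M)).mono_fun'
    (hL.comp_stronglyMeasurable (hf.continuous.stronglyMeasurable.prodMk
      (stronglyMeasurable_deriv f))).aestronglyMeasurable
    ((ae_restrict_iff' measurableSet_uIoc).2 (Eventually.of_forall fun r hr =>
      hM (f r, deriv f r) ⟨mem_image_of_mem f (uIoc_subset_uIcc hr),
        mem_closedBall_zero_iff.2 (norm_deriv_le_of_lipschitz hf)⟩))

theorem LipschitzWith.integral_deriv_eq_sub [FiniteDimensional ℝ E]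
    (hf : LipschitzWith K f) (a b : ℝ) : ∫ r in a..b, deriv f r = f b - f a := by
  set g : ℝ → E := fun x => f x - ∫ r in a..x, deriv f r
  have hg : LipschitzWith (K + K) g := by
    refine hf.sub (LipschitzWith.of_dist_le_mul fun x y => ?_)
    rw [dist_eq_norm, integral_interval_sub_left (hf.intervalIntegrable_deriv a x)
      (hf.intervalIntegrable_deriv a y), Real.dist_eq]
    exact norm_integral_le_of_norm_le_const (f := deriv f) fun _ _ =>
      norm_deriv_le_of_lipschitz hf
  have hg' : ∀ᵐ x, x ∈ uIcc a b → HasDerivAt g 0 x := by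
    filter_upwards [hf.ae_differentiableAt_real,
      (hf.intervalIntegrable_deriv a b).ae_hasDerivAt_integral] with x hfx hFx hx
    have := hfx.hasDerivAt.sub (hFx hx a left_mem_uIcc)
    rwa [sub_self] at this
  obtain ⟨C, hC⟩ := ((hg.lipschitzOnWith (s := uIcc a b)).absolutelyContinuousOnInterval
    ).const_of_ae_hasDerivAt_zero hg'
  have hga := hC a left_mem_uIcc
  have hgb := hC b right_mem_uIcc
  simp only [g, integral_same, sub_zero] at hga hgb
  rw [← hga] at hgb
  rw [← hgb]
  abel

theorem LipschitzWith.norm_sub_le_integral [FiniteDimensional ℝ E] (hf : LipschitzWith K f)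
    {e : ℝ → ℝ} {t T σ s : ℝ} (he : IntervalIntegrable e volume t T)
    (he₀ : ∀ r ∈ Icc t T, 0 ≤ e r) (htσ : t ≤ σ) (hσs : σ ≤ s) (hsT : s ≤ T)
    (hle : ∀ r ∈ Ioc σ s, ‖deriv f r‖ ≤ e r) : ‖f s - f σ‖ ≤ ∫ r in t..T, e r :=
  calc ‖f s - f σ‖ = ‖∫ r in σ..s, deriv f r‖ := by rw [hf.integral_deriv_eq_sub]
    _ ≤ ∫ r in σ..s, ‖deriv f r‖ := norm_integral_le_integral_norm hσs
    _ ≤ ∫ r in σ..s, e r :=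
      integral_mono_on_of_le_Ioo hσs (hf.intervalIntegrable_deriv σ s).norm
        (he.mono_set (uIcc_subset_uIcc (Icc_subset_uIcc ⟨htσ, hσs.trans hsT⟩)
          (Icc_subset_uIcc ⟨htσ.trans hσs, hsT⟩)))
        fun r hr => hle r (Ioo_subset_Ioc_self hr)
    _ ≤ ∫ r in t..T, e r :=
      integral_mono_interval htσ hσs hsT
        ((ae_restrict_iff' measurableSet_Ioc).2 (Eventually.of_forall fun r hr =>
          he₀ r (Ioc_subset_Icc_self hr))) he

end LipschitzCurve

theorem Continuous.exists_last_hitting_time {X : Type*} [TopologicalSpace X] {f : ℝ → X}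
    (hf : Continuous f) {K : Set X} (hK : IsClosed K) {t s : ℝ} (hts : t ≤ s) :
    ∃ σ ∈ Icc t s, (σ = t ∨ f σ ∈ K) ∧ ∀ r ∈ Ioc σ s, f r ∉ K := by
  set S := Icc t s ∩ f ⁻¹' K
  rcases S.eq_empty_or_nonempty with hS | hS
  · exact ⟨t, left_mem_Icc.2 hts, Or.inl rfl, fun r hr hrK =>
      hS.subset ⟨Ioc_subset_Icc_self hr, hrK⟩⟩
  · have hσ : sSup S ∈ S := (isCompact_Icc.inter_right (hK.preimage hf)).sSup_mem hS
    refine ⟨sSup S, hσ.1, Or.inr hσ.2, fun r hr hrK => ?_⟩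
    have : r ≤ sSup S := le_csSup (bddAbove_Icc.mono inter_subset_left)
      ⟨⟨hσ.1.1.trans hr.1.le, hr.2⟩, hrK⟩
    exact hr.1.not_ge this

theorem intervalIntegral.integral_le_mul_of_eq_zero_of_lt {f : ℝ → ℝ} {t T ℓ M : ℝ}
    (htT : t ≤ T) (hℓ : 0 ≤ ℓ) (hM : 0 ≤ M) (hf : IntervalIntegrable f volume t T)
    (hle : ∀ r ∈ Icc t T, f r ≤ M) (hzero : ∀ r, t + ℓ < r → f r = 0) :
    ∫ r in t..T, f r ≤ ℓ * M := by
  set t₁ := min (t + ℓ) T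
  have htt₁ : t ≤ t₁ := le_min (by linarith) htT
  have ht₁T : t₁ ≤ T := min_le_right _ _
  have ht₁ : t₁ ∈ uIcc t T := Icc_subset_uIcc ⟨htt₁, ht₁T⟩
  have hsplit : IntervalIntegrable f volume t t₁ ∧ IntervalIntegrable f volume t₁ T :=
    ⟨hf.mono_set (uIcc_subset_uIcc_left ht₁), hf.mono_set (uIcc_subset_uIcc_right ht₁)⟩
  have htail : ∫ r in t₁..T, f r = 0 := by
    rw [integral_of_le ht₁T]
    refine setIntegral_eq_zero_of_forall_eq_zero fun r hr => hzero r ?_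
    rcases min_lt_iff.1 hr.1 with h | h
    · exact h
    · exact absurd hr.2 h.not_ge
  have hhead : ∫ r in t..t₁, f r ≤ (t₁ - t) * M := by
    simpa using integral_mono_on htt₁ hsplit.1 intervalIntegrable_const
      fun r hr => hle r ⟨hr.1, hr.2.trans ht₁T⟩
  rw [← integral_add_adjacent_intervals hsplit.1 hsplit.2, htail, add_zero]
  nlinarith [min_le_left (t + ℓ) T]

section Ramp

variable {E : Type*} [NormedAddCommGroup E] [NormedSpace ℝ E]

def ramp (x y : E) (t : ℝ) (r : ℝ) : E := x + (projIcc 0 1 zero_le_one (r - t) : ℝ) • (y - x)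

theorem ramp_apply_start (x y : E) (t : ℝ) : ramp x y t t = x := by
  simp [ramp]

theorem lipschitzWith_ramp (x y : E) (t : ℝ) : LipschitzWith ‖y - x‖₊ (ramp x y t) := by
  refine LipschitzWith.of_dist_le_mul fun r₁ r₂ => ?_
  have hp := (LipschitzWith.projIcc (zero_le_one' ℝ)).dist_le_mul (r₁ - t) (r₂ - t)
  rw [ramp, ramp, dist_add_left, dist_eq_norm, ← sub_smul, norm_smul, coe_nnnorm, mul_comm]
  refine mul_le_mul_of_nonneg_left ?_ (norm_nonneg _)
  simpa [Subtype.dist_eq, Real.dist_eq] using hp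

theorem ramp_mem {s : Set E} (hs : Convex ℝ s) {x y : E} (hx : x ∈ s) (hy : y ∈ s) (t r : ℝ) :
    ramp x y t r ∈ s :=
  hs.add_smul_sub_mem hx hy (projIcc 0 1 zero_le_one (r - t)).2

theorem ramp_eventuallyEq_of_lt (x y : E) {t r : ℝ} (hr : t + 1 < r) :
    ramp x y t =ᶠ[𝓝 r] fun _ => y := by
  filter_upwards [Ioi_mem_nhds hr] with r' hr'
  rw [ramp, projIcc_of_right_le _ (by simp only [mem_Ioi] at hr'; linarith)]
  simp

end Ramp

section Variational

variable {n : ℕ} {L : Euc n → Euc n → ℝ} {c : ℝ → Euc n → ℝ} {T t : ℝ} {ξ : ℝ → Euc n}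

theorem IsStrictTonelli.quadratic_bounds {C₁ C₂ C₃ : ℝ} (hTon : IsStrictTonelli L C₁ C₂ C₃)
    (hRev : ∀ x v : Euc n, L x v = L x (-v)) (y v : Euc n) :
    L y 0 + 1 / C₁ / 2 * ‖v‖ ^ 2 ≤ L y v ∧ L y v ≤ L y 0 + C₁ / 2 * ‖v‖ ^ 2 :=
  Function.Even.quadratic_bounds (hTon.1.comp (contDiff_const.prodMk contDiff_id))
    (fun v => (hRev y v).symm) (hTon.2.1 y) v

theorem IsStrictTonelli.abs_apply_zero_le {C₁ C₂ C₃ : ℝ} (hTon : IsStrictTonelli L C₁ C₂ C₃)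
    (y : Euc n) : |L y 0| ≤ C₃ := by
  linarith [hTon.2.2.2 y, norm_nonneg (fderiv ℝ (fun y => L y 0) y),
    norm_nonneg (fderiv ℝ (L y) 0)]

def wellExcess (L : Euc n → Euc n → ℝ) (c : ℝ → Euc n → ℝ) (xT : Euc n) (ξ : ℝ → Euc n)
    (r : ℝ) : ℝ :=
  L (ξ r) (deriv ξ r) + c r (ξ r) - (L xT 0 + c r xT)

theorem WellCondition.wellExcess_nonneg {K₀ : Set (Euc n)} {δ₀ : ℝ} {xT : Euc n}
    (hw : WellCondition L c K₀ δ₀ T xT) (hδ₀ : 0 ≤ δ₀) (hL : ∀ y v, L y 0 ≤ L y v) {r : ℝ}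
    (hr : r ∈ Icc 0 T) : 0 ≤ wellExcess L c xT ξ r := by
  have := hL (ξ r) (deriv ξ r)
  rw [wellExcess]
  by_cases hξr : ξ r ∈ K₀
  · linarith [(hw.2 r hr).1 _ hξr, this]
  · linarith [(hw.2 r hr).2 _ hξr, this]

theorem WellCondition.norm_deriv_le_wellExcess {K₀ : Set (Euc n)} {δ₀ C₁ : ℝ} {xT : Euc n}
    (hw : WellCondition L c K₀ δ₀ T xT) (hδ₀ : 0 < δ₀) (hC₁ : 0 < C₁)
    (hL : ∀ y v, L y 0 + 1 / C₁ / 2 * ‖v‖ ^ 2 ≤ L y v) {r : ℝ} (hr : r ∈ Icc 0 T)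
    (hout : ξ r ∉ K₀) : ‖deriv ξ r‖ ≤ (C₁ + (2 * δ₀)⁻¹) * wellExcess L c xT ξ r := by
  have hexcess : 1 / C₁ / 2 * ‖deriv ξ r‖ ^ 2 + δ₀ ≤ wellExcess L c xT ξ r := by
    rw [wellExcess]
    linarith [(hw.2 r hr).2 _ hout, hL (ξ r) (deriv ξ r)]
  refine le_trans ?_ (mul_le_mul_of_nonneg_left hexcess (by positivity))
  set a := ‖deriv ξ r‖
  have hexpand : (C₁ + (2 * δ₀)⁻¹) * (1 / C₁ / 2 * a ^ 2 + δ₀)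
      = (a ^ 2 + 1) / 2 + C₁ * δ₀ + a ^ 2 / (4 * C₁ * δ₀) := by
    field_simp
    ring
  rw [hexpand]
  have hrest : 0 ≤ C₁ * δ₀ + a ^ 2 / (4 * C₁ * δ₀) := by positivity
  nlinarith [sq_nonneg (a - 1)]

theorem wellExcess_le {C₁ C₃ C_F : ℝ} (hL : ∀ y v, L y v ≤ L y 0 + C₁ / 2 * ‖v‖ ^ 2)
    (hL0 : ∀ y, |L y 0| ≤ C₃) (hcF : ∀ s ∈ Icc (0 : ℝ) T, ∀ x, |c s x| ≤ C_F) (xT : Euc n)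
    {r : ℝ} (hr : r ∈ Icc 0 T) :
    wellExcess L c xT ξ r ≤ 2 * (C₃ + C_F) + C₁ / 2 * ‖deriv ξ r‖ ^ 2 := by
  have h₁ := abs_le.1 (hL0 (ξ r))
  have h₂ := abs_le.1 (hL0 xT)
  have h₃ := abs_le.1 (hcF r hr (ξ r))
  have h₄ := abs_le.1 (hcF r hr xT)
  rw [wellExcess]
  linarith [hL (ξ r) (deriv ξ r)]

theorem wellExcess_eq_zero_of_eventuallyEq {xT : Euc n} {r : ℝ}
    (h : ξ =ᶠ[𝓝 r] fun _ => xT) : wellExcess L c xT ξ r = 0 := by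
  simp [wellExcess, h.deriv_eq, h.eq_of_nhds]

theorem intervalIntegrable_coupling
    (hc : ContinuousOn (fun p : ℝ × Euc n => c p.1 p.2) (Icc 0 T ×ˢ univ)) (ht : t ∈ Icc 0 T)
    {ζ : ℝ → Euc n} (hζ : Continuous ζ) :
    IntervalIntegrable (fun r => c r (ζ r)) volume t T :=
  (hc.comp (continuous_id.prodMk hζ).continuousOn fun _ hr =>
    ⟨Icc_subset_Icc_left ht.1 (uIcc_of_le ht.2 ▸ hr), mem_univ _⟩).intervalIntegrable

theorem intervalIntegrable_runningCost (hL : Continuous (Function.uncurry L))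
    (hc : ContinuousOn (fun p : ℝ × Euc n => c p.1 p.2) (Icc 0 T ×ˢ univ)) (ht : t ∈ Icc 0 T)
    {K : ℝ≥0} (hξ : LipschitzWith K ξ) :
    IntervalIntegrable (fun r => L (ξ r) (deriv ξ r) + c r (ξ r)) volume t T :=
  (hξ.intervalIntegrable_comp_deriv hL t T).add (intervalIntegrable_coupling hc ht hξ.continuous)

theorem intervalIntegrable_wellExcess (hL : Continuous (Function.uncurry L))
    (hc : ContinuousOn (fun p : ℝ × Euc n => c p.1 p.2) (Icc 0 T ×ˢ univ)) (ht : t ∈ Icc 0 T)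
    {K : ℝ≥0} (hξ : LipschitzWith K ξ) (xT : Euc n) :
    IntervalIntegrable (wellExcess L c xT ξ) volume t T :=
  (intervalIntegrable_runningCost hL hc ht hξ).sub
    (intervalIntegrable_const.add (intervalIntegrable_coupling hc ht continuous_const))

theorem WellCondition.norm_sub_le_mul_integral_wellExcess {K₀ : Set (Euc n)} {δ₀ C₁ : ℝ}
    {xT : Euc n} (hw : WellCondition L c K₀ δ₀ T xT) (hδ₀ : 0 < δ₀) (hC₁ : 0 < C₁)
    (hLlow : ∀ y v, L y 0 + 1 / C₁ / 2 * ‖v‖ ^ 2 ≤ L y v) (hL : Continuous (Function.uncurry L))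
    (hc : ContinuousOn (fun p : ℝ × Euc n => c p.1 p.2) (Icc 0 T ×ˢ univ)) (ht : t ∈ Icc 0 T)
    {K : ℝ≥0} (hξ : LipschitzWith K ξ) {σ s : ℝ} (htσ : t ≤ σ) (hσs : σ ≤ s) (hsT : s ≤ T)
    (hout : ∀ r ∈ Ioc σ s, ξ r ∉ K₀) :
    ‖ξ s - ξ σ‖ ≤ (C₁ + (2 * δ₀)⁻¹) * ∫ r in t..T, wellExcess L c xT ξ r := by
  rw [← intervalIntegral.integral_const_mul]
  refine hξ.norm_sub_le_integral ((intervalIntegrable_wellExcess hL hc ht hξ xT).const_mul _)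
    (fun r hr => mul_nonneg (by positivity) (hw.wellExcess_nonneg hδ₀.le
      (fun y v => (le_add_of_nonneg_right (by positivity)).trans (hLlow y v))
      ⟨ht.1.trans hr.1, hr.2⟩)) htσ hσs hsT fun r hr => ?_
  exact hw.norm_deriv_le_wellExcess hδ₀ hC₁ hLlow
    ⟨ht.1.trans (htσ.trans hr.1.le), hr.2.trans hsT⟩ (hout r hr)

theorem IsMinimizer.integral_wellExcess_add_le {uf : Euc n → ℝ} {x xT : Euc n}
    (hξ : IsMinimizer L c uf t T x ξ) (hL : Continuous (Function.uncurry L))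
    (hc : ContinuousOn (fun p : ℝ × Euc n => c p.1 p.2) (Icc 0 T ×ˢ univ)) (ht : t ∈ Icc 0 T)
    {η : ℝ → Euc n} {K : ℝ≥0} (hη : LipschitzWith K η) (hηt : η t = x) :
    (∫ r in t..T, wellExcess L c xT ξ r) + uf (ξ T) ≤
      (∫ r in t..T, wellExcess L c xT η r) + uf (η T) := by
  obtain ⟨⟨Kξ, hKξ⟩, -, hmin⟩ := hξ
  have hβ : IntervalIntegrable (fun r => L xT 0 + c r xT) volume t T :=
    intervalIntegrable_const.add (intervalIntegrable_coupling hc ht continuous_const)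
  have hcmp := hmin η ⟨K, hη⟩ hηt
  simp only [action] at hcmp
  have hξsplit := integral_sub (intervalIntegrable_runningCost hL hc ht hKξ) hβ
  have hηsplit := integral_sub (intervalIntegrable_runningCost hL hc ht hη) hβ
  simp only [wellExcess]
  linarith

theorem IsMinimizer.integral_wellExcess_le {uf : Euc n → ℝ} {x xT : Euc n}
    {C₁ C₃ C_F R c₀ : ℝ} {Kf : ℝ≥0} (hξ : IsMinimizer L c uf t T x ξ)
    (hL : Continuous (Function.uncurry L))
    (hc : ContinuousOn (fun p : ℝ × Euc n => c p.1 p.2) (Icc 0 T ×ˢ univ)) (ht : t ∈ Icc 0 T)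
    (hC₁ : 0 ≤ C₁) (hLup : ∀ y v, L y v ≤ L y 0 + C₁ / 2 * ‖v‖ ^ 2)
    (hL0 : ∀ y, |L y 0| ≤ C₃) (hcF : ∀ s ∈ Icc (0 : ℝ) T, ∀ x, |c s x| ≤ C_F)
    (hx : ‖x‖ ≤ R) (hxT : ‖xT‖ ≤ R) (huf : LipschitzWith Kf uf) (hufge : ∀ y, -c₀ ≤ uf y) :
    ∫ r in t..T, wellExcess L c xT ξ r ≤
      2 * (C₃ + C_F) + 2 * C₁ * R ^ 2 + (uf 0 + Kf * R + c₀) := by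
  set η := ramp x xT t
  have hηR : ∀ r, ‖η r‖ ≤ R := fun r => mem_closedBall_zero_iff.1 <|
    ramp_mem (convex_closedBall 0 R) (mem_closedBall_zero_iff.2 hx)
      (mem_closedBall_zero_iff.2 hxT) t r
  have hη' : ∀ r, ‖deriv η r‖ ≤ 2 * R := fun r => by
    have := norm_deriv_le_of_lipschitz (x₀ := r) (lipschitzWith_ramp x xT t)
    rw [coe_nnnorm] at this
    linarith [norm_sub_le xT x]
  have hC₃ : 0 ≤ C₃ := (abs_nonneg _).trans (hL0 0)
  have hC_F : 0 ≤ C_F := (abs_nonneg _).trans (hcF t ht 0)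
  have hexcess : ∫ r in t..T, wellExcess L c xT η r ≤ 1 * (2 * (C₃ + C_F) + 2 * C₁ * R ^ 2) :=
    integral_le_mul_of_eq_zero_of_lt ht.2 zero_le_one (by positivity)
      (intervalIntegrable_wellExcess hL hc ht (lipschitzWith_ramp x xT t) xT)
      (fun r hr => (wellExcess_le hLup hL0 hcF xT ⟨ht.1.trans hr.1, hr.2⟩).trans (by
        nlinarith [pow_le_pow_left₀ (norm_nonneg _) (hη' r) 2]))
      fun r hr => wellExcess_eq_zero_of_eventuallyEq (ramp_eventuallyEq_of_lt x xT hr)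
  have hufη : uf (η T) ≤ uf 0 + Kf * R := by
    have := (abs_le.1 ((huf.dist_le_mul (η T) 0).trans_eq (by rw [dist_zero_right]))).2
    nlinarith [hηR T, Kf.coe_nonneg]
  have hcmp : (∫ r in t..T, wellExcess L c xT ξ r) + uf (ξ T) ≤
      (∫ r in t..T, wellExcess L c xT η r) + uf (η T) :=
    hξ.integral_wellExcess_add_le hL hc ht (lipschitzWith_ramp x xT t) (ramp_apply_start x xT t)
  linarith [hufge (ξ T)]

end Variational

theorem stmt11_general (n : ℕ) (L : Euc n → Euc n → ℝ) (C₁ C₂ C₃ : ℝ)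
    (hC₁ : 0 < C₁) (hC₃ : 0 < C₃)
    (hTon : IsStrictTonelli L C₁ C₂ C₃)
    (hRev : ∀ x v : Euc n, L x v = L x (-v))
    (C_F : ℝ) (hCF : 0 ≤ C_F)
    (K₀ : Set (Euc n)) (hK₀c : IsCompact K₀)
    (R₀ : ℝ) (hR₀ : 0 < R₀) (hK₀R₀ : K₀ ⊆ closedBall 0 R₀)
    (δ₀ : ℝ) (hδ₀ : 0 < δ₀)
    (uf : Euc n → ℝ) (Kf : ℝ≥0) (huf : LipschitzWith Kf uf)
    (c₀ : ℝ) (hufge : ∀ x, -c₀ ≤ uf x)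
    (R : ℝ) (hR : R₀ ≤ R) :
    ∃ χ > (0 : ℝ), ∀ T : ℝ, 1 < T → ∀ c : ℝ → Euc n → ℝ,
      ContinuousOn (fun p : ℝ × Euc n => c p.1 p.2) (Set.Icc 0 T ×ˢ Set.univ) →
      (∀ s ∈ Set.Icc (0 : ℝ) T, ∀ x, |c s x| ≤ C_F) →
      (∃ xT : Euc n, WellCondition L c K₀ δ₀ T xT) →
      ∀ t ∈ Set.Icc (0 : ℝ) T, ∀ x ∈ closedBall (0 : Euc n) R, ∀ ξ : ℝ → Euc n,
        IsMinimizer L c uf t T x ξ →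
        ∀ s ∈ Set.Icc t T, ‖ξ s‖ ≤ χ := by
  have hquad := hTon.quadratic_bounds hRev
  have hRpos : 0 < R := hR₀.trans_le hR
  set B := 2 * (C₃ + C_F) + 2 * C₁ * R ^ 2 + (uf 0 + Kf * R + c₀) with hB_def
  have hB : 0 ≤ B := by
    rw [hB_def]
    nlinarith [hufge 0, mul_nonneg Kf.coe_nonneg hRpos.le, mul_nonneg hC₁.le (sq_nonneg R)]
  refine ⟨R + (C₁ + (2 * δ₀)⁻¹) * B,
    add_pos_of_pos_of_nonneg hRpos (mul_nonneg (by positivity) hB), ?_⟩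
  rintro T - c hc hcF ⟨xT, hw⟩ t ht x hx ξ hξ s ⟨hts, hsT⟩
  obtain ⟨K, hK⟩ := hξ.1
  have hball {y} (hy : y ∈ K₀) : ‖y‖ ≤ R := by
    simpa using (mem_closedBall.1 (hK₀R₀ hy)).trans hR
  have hexcess := hξ.integral_wellExcess_le hTon.1.continuous hc ht hC₁.le
    (fun y v => (hquad y v).2) hTon.abs_apply_zero_le hcF (mem_closedBall_zero_iff.1 hx)
    (hball hw.1) huf hufge
  obtain ⟨σ, ⟨htσ, hσs⟩, hσ, hout⟩ := hK.continuous.exists_last_hitting_time hK₀c.isClosed hts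
  have hσR : ‖ξ σ‖ ≤ R := by
    rcases hσ with rfl | hσK
    · exact hξ.2.1 ▸ mem_closedBall_zero_iff.1 hx
    · exact hball hσK
  calc ‖ξ s‖ ≤ ‖ξ σ‖ + ‖ξ s - ξ σ‖ := norm_le_norm_add_norm_sub' _ _
    _ ≤ R + (C₁ + (2 * δ₀)⁻¹) * B :=
      add_le_add hσR ((hw.norm_sub_le_mul_integral_wellExcess hδ₀ hC₁ (fun y v => (hquad y v).1)
        hTon.1.continuous hc ht hK htσ hσs hsT hout).trans
          (mul_le_mul_of_nonneg_left hexcess (by positivity)))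

/-- uniform bound on minimizers: in the time-dependent variational setting,
for every `R ≥ R₀` there is `χ(R) > 0`, independent of the horizon `T > 1` and of the
coupling `c` (with `|c| ≤ C_F` and satisfying the uniform well condition), such that every
minimizer `ξ*` from `(t,x)` with `t ∈ [0,T]`, `x ∈ B̄_R` satisfies
`sup_{s ∈ [t,T]} |ξ*(s)| ≤ χ(R)`. -/
theorem stmt11 (n : ℕ) (hn : 1 ≤ n) (L : Euc n → Euc n → ℝ) (C₁ C₂ C₃ : ℝ)
    (hC₁ : 0 < C₁) (hC₂ : 0 < C₂) (hC₃ : 0 < C₃)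
    (hTon : IsStrictTonelli L C₁ C₂ C₃)
    (hRev : ∀ x v : Euc n, L x v = L x (-v))
    (C_F : ℝ) (hCF : 0 ≤ C_F)
    (K₀ : Set (Euc n)) (hK₀c : IsCompact K₀) (hK₀ne : K₀.Nonempty)
    (R₀ : ℝ) (hR₀ : 0 < R₀) (hK₀R₀ : K₀ ⊆ closedBall 0 R₀)
    (δ₀ : ℝ) (hδ₀ : 0 < δ₀)
    (uf : Euc n → ℝ) (Kf : ℝ≥0) (huf : LipschitzWith Kf uf)
    (c₀ : ℝ) (hc₀ : 0 ≤ c₀) (hufge : ∀ x, -c₀ ≤ uf x)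
    (R : ℝ) (hR : R₀ ≤ R) :
    ∃ χ > (0 : ℝ), ∀ T : ℝ, 1 < T → ∀ c : ℝ → Euc n → ℝ,
      ContinuousOn (fun p : ℝ × Euc n => c p.1 p.2) (Set.Icc 0 T ×ˢ Set.univ) →
      (∀ s ∈ Set.Icc (0 : ℝ) T, ∀ x, |c s x| ≤ C_F) →
      (∃ xT : Euc n, WellCondition L c K₀ δ₀ T xT) →
      ∀ t ∈ Set.Icc (0 : ℝ) T, ∀ x ∈ closedBall (0 : Euc n) R, ∀ ξ : ℝ → Euc n,
        IsMinimizer L c uf t T x ξ →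
        ∀ s ∈ Set.Icc t T, ‖ξ s‖ ≤ χ :=
  stmt11_general n L C₁ C₂ C₃ hC₁ hC₃ hTon hRev C_F hCF K₀ hK₀c R₀ hR₀ hK₀R₀ δ₀ hδ₀ uf Kf huf c₀
    hufge R hR
end
end

section
/- In the time-dependent variational setting described in the context, let m₀ be a Borel probability measure on ℝⁿ whose support is contained in K₀, and let φ : [0,T]×ℝⁿ → ℝⁿ be a map such that for each x ∈ K₀ the curve s ↦ φ(s,x) is a minimizer from (0,x), and such that for each t ∈ [0,T] the map x ↦ φ(t,x) is Borel measurable. Then there exists a constant R₁ > 0, depending only on n, the Tonelli constants of L, C_F, R₀, δ₀, c₀, the Lipschitz constant of u^f, and sup_{K₀}|u^f| (in particular independent of T and of the particular coupling c), such that for every t ∈ [0,T] the pushforward measure φ(t,·)♯m₀ is supported in the closed ball B̄_{R₁}. -/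
noncomputable section

open MeasureTheory Metric Set
open scoped RealInnerProductSpace NNReal

/-!
Compare a minimizer `ξ` from `x ∈ K₀` with the competitor that walks straight to the well point
`x_T` during `[0, 1]` and rests there. By reversibility and the Tonelli bounds,
`L(y, v) ≥ L(y, 0) + |v|² / (2C₁)`, so the well condition bounds the kinetic energy
`∫ |ξ'|² / (2C₁)` plus `δ₀` times the time spent outside `K₀` by the action gap with the
competitor, which is a constant `A` independent of `T` and `c`. After its last visit to `K₀`
before time `t`, `ξ` stays outside `K₀`, so this excursion lasts at most `A / δ₀`; since
`|v| ≤ (1 + |v|²) / 2`, it covers a distance at most `A / (2δ₀) + C₁ A`.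
-/

open Filter intervalIntegral
open scoped Topology

theorem add_deriv_add_half_le_of_deriv2_ge {φ φ' φ'' : ℝ → ℝ} {a : ℝ}
    (hφ : ∀ t, HasDerivAt φ (φ' t) t) (hφ' : ∀ t, HasDerivAt φ' (φ'' t) t)
    (ha : ∀ t, a ≤ φ'' t) : φ 0 + φ' 0 + a / 2 ≤ φ 1 := by
  have hψ : ∀ t, HasDerivAt (fun t => φ t - a / 2 * t ^ 2) (φ' t - a * t) t := fun t =>
    ((hφ t).sub ((hasDerivAt_pow 2 t).const_mul (a / 2))).congr_deriv (by norm_num; ring)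
  have hψ' : ∀ t, HasDerivAt (fun t => φ' t - a * t) (φ'' t - a) t := fun t =>
    ((hφ' t).sub ((hasDerivAt_id' t).const_mul a)).congr_deriv (by ring)
  have hmono : Monotone (fun t => φ' t - a * t) :=
    monotone_of_deriv_nonneg (fun t => (hψ' t).differentiableAt)
      (fun t => by rw [(hψ' t).deriv]; linarith [ha t])
  obtain ⟨c, hc, hslope⟩ := exists_hasDerivAt_eq_slope (fun t => φ t - a / 2 * t ^ 2)
    (fun t => φ' t - a * t) zero_lt_one
    (continuous_iff_continuousAt.2 fun t => (hψ t).continuousAt).continuousOn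
    (fun t _ => hψ t)
  have := hmono hc.1.le
  norm_num at this hslope
  linarith

section SecondOrder

variable {E : Type*} [NormedAddCommGroup E] [NormedSpace ℝ E]

theorem add_fderiv_add_half_mul_sq_le {g : E → ℝ} (hg : ContDiff ℝ 2 g) {m : ℝ}
    (hm : ∀ u w, m * ‖w‖ ^ 2 ≤ iteratedFDeriv ℝ 2 g u ![w, w]) (x v : E) :
    g x + fderiv ℝ g x v + m / 2 * ‖v‖ ^ 2 ≤ g (x + v) := by
  have hline : ∀ t : ℝ, HasDerivAt (fun t : ℝ => x + t • v) v t := fun t => by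
    simpa using ((hasDerivAt_id t).smul_const v).const_add x
  have hg1 : Differentiable ℝ g := hg.differentiable two_ne_zero
  have hg2 : Differentiable ℝ (fderiv ℝ g) :=
    (hg.fderiv_right (m := 1) le_rfl).differentiable one_ne_zero
  have h := add_deriv_add_half_le_of_deriv2_ge (a := m * ‖v‖ ^ 2)
    (φ := fun t => g (x + t • v)) (φ' := fun t => fderiv ℝ g (x + t • v) v)
    (φ'' := fun t => iteratedFDeriv ℝ 2 g (x + t • v) ![v, v])
    (fun t => (hg1 _).hasFDerivAt.comp_hasDerivAt t (hline t))
    (fun t => by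
      rw [iteratedFDeriv_two_apply]
      simpa using ((hg2 _).hasFDerivAt.comp_hasDerivAt t (hline t)).clm_apply
        (hasDerivAt_const t v))
    (fun t => hm _ v)
  simp only [zero_smul, add_zero, one_smul] at h
  linarith

theorem add_half_mul_sq_le_of_even {g : E → ℝ} (hg : ContDiff ℝ 2 g) (heven : ∀ v, g (-v) = g v)
    {m : ℝ} (hm : ∀ u w, m * ‖w‖ ^ 2 ≤ iteratedFDeriv ℝ 2 g u ![w, w]) (v : E) :
    g 0 + m / 2 * ‖v‖ ^ 2 ≤ g v := by
  have hv := add_fderiv_add_half_mul_sq_le hg hm 0 v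
  have hnv := add_fderiv_add_half_mul_sq_le hg hm 0 (-v)
  rw [zero_add, map_neg, norm_neg, heven] at hnv
  rw [zero_add] at hv
  linarith

end SecondOrder

section Tonelli

variable {n : ℕ} {L : Euc n → Euc n → ℝ} {C₁ C₂ C₃ : ℝ}

theorem IsStrictTonelli.contDiff_right (hL : IsStrictTonelli L C₁ C₂ C₃) (x : Euc n) :
    ContDiff ℝ 2 (L x) :=
  hL.1.comp (contDiff_const.prodMk contDiff_id)

theorem IsStrictTonelli.abs_le_at_zero (hL : IsStrictTonelli L C₁ C₂ C₃) (x : Euc n) :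
    |L x 0| ≤ C₃ := by
  linarith [hL.2.2.2 x, norm_nonneg (fderiv ℝ (fun y => L y 0) x), norm_nonneg (fderiv ℝ (L x) 0)]

variable (hL : IsStrictTonelli L C₁ C₂ C₃) (hrev : ∀ x v, L x v = L x (-v))
include hL hrev

theorem IsStrictTonelli.add_sq_le (x v : Euc n) : L x 0 + 1 / (2 * C₁) * ‖v‖ ^ 2 ≤ L x v := by
  have := add_half_mul_sq_le_of_even (hL.contDiff_right x) (fun v => (hrev x v).symm)
    (fun u w => (hL.2.1 x u w).1) v
  convert this using 3; ring

theorem IsStrictTonelli.le_add_sq (x v : Euc n) : L x v ≤ L x 0 + C₁ / 2 * ‖v‖ ^ 2 := by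
  have := add_half_mul_sq_le_of_even (g := -(L x)) (hL.contDiff_right x).neg
    (fun v => by simp only [Pi.neg_apply, ← hrev]) (m := -C₁)
    (fun u w => by
      rw [iteratedFDeriv_neg_apply, neg_apply]
      linarith [(hL.2.1 x u w).2]) v
  simp only [Pi.neg_apply] at this
  linarith

end Tonelli

theorem Continuous.exists_last_mem {X : Type*} [TopologicalSpace X] {ξ : ℝ → X} {K : Set X}
    (hξ : Continuous ξ) (hK : IsClosed K) (h0 : ξ 0 ∈ K) {t : ℝ} (ht : 0 ≤ t) :
    ∃ σ ∈ Icc 0 t, ξ σ ∈ K ∧ Ioc σ t ⊆ ξ ⁻¹' Kᶜ := by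
  set S := Icc 0 t ∩ ξ ⁻¹' K
  have hS : IsClosed S := isClosed_Icc.inter (hK.preimage hξ)
  have hbdd : BddAbove S := bddAbove_Icc.mono inter_subset_left
  obtain ⟨hσ, hξσ⟩ := hS.csSup_mem ⟨0, ⟨le_rfl, ht⟩, h0⟩ hbdd
  refine ⟨sSup S, hσ, hξσ, fun s hs hsK => ?_⟩
  have : s ≤ sSup S := le_csSup hbdd ⟨⟨hσ.1.trans hs.1.le, hs.2⟩, hsK⟩
  exact absurd hs.1 this.not_gt

section Curves

variable {V : Type*} [NormedAddCommGroup V] [NormedSpace ℝ V] [FiniteDimensional ℝ V]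
  [MeasurableSpace V] [BorelSpace V]
  {ξ : ℝ → V} {K : ℝ≥0}

theorem LipschitzWith.intervalIntegrable_comp_deriv_s14
    (hξ : LipschitzWith K ξ) {h : V × V → ℝ} (hh : Continuous h) (a b : ℝ) :
    IntervalIntegrable (fun s => h (ξ s, deriv ξ s)) volume a b := by
  obtain ⟨M, hM⟩ := ((isCompact_uIcc.image hξ.continuous).prod
    (isCompact_closedBall (0 : V) K)).exists_bound_of_continuousOn hh.continuousOn
  have hmeas := hh.measurable.comp (hξ.continuous.measurable.prodMk (measurable_deriv ξ))
  refine (intervalIntegrable_const (c := M)).mono_fun hmeas.aestronglyMeasurable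
    ((ae_restrict_iff' measurableSet_uIoc).2 (Eventually.of_forall fun s hs => ?_))
  refine (hM _ ⟨mem_image_of_mem ξ (uIoc_subset_uIcc hs), ?_⟩).trans (le_abs_self M)
  exact mem_closedBall_zero_iff.2 (norm_deriv_le_of_lipschitz hξ)

theorem LipschitzWith.intervalIntegrable_norm_deriv_pow (hξ : LipschitzWith K ξ) (k : ℕ)
    (a b : ℝ) : IntervalIntegrable (fun s => ‖deriv ξ s‖ ^ k) volume a b :=
  hξ.intervalIntegrable_comp_deriv_s14 (h := fun p => ‖p.2‖ ^ k) (by fun_prop) a b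

theorem LipschitzWith.norm_sub_le_integral_norm_deriv (hξ : LipschitzWith K ξ) {a b : ℝ}
    (hab : a ≤ b) : ‖ξ b - ξ a‖ ≤ ∫ s in a..b, ‖deriv ξ s‖ := by
  -- Pair with a norming functional `g` and apply the scalar FTC to the Lipschitz function `g ∘ ξ`.
  obtain ⟨g, hg_norm, hg⟩ := exists_dual_vector'' ℝ (ξ b - ξ a)
  have hac :=
    ((g.lipschitz.comp hξ).lipschitzOnWith (s := uIcc a b)).absolutelyContinuousOnInterval
  have hderiv : ∀ᵐ s, deriv (g ∘ ξ) s ≤ ‖deriv ξ s‖ := by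
    filter_upwards [hξ.ae_differentiableAt_real] with s hs
    rw [(g.hasFDerivAt.comp_hasDerivAt s hs.hasDerivAt).deriv]
    calc g (deriv ξ s) ≤ ‖g‖ * ‖deriv ξ s‖ := (le_abs_self _).trans (g.le_opNorm _)
      _ ≤ ‖deriv ξ s‖ := mul_le_of_le_one_left (norm_nonneg _) hg_norm
  calc ‖ξ b - ξ a‖ = ∫ s in a..b, deriv (g ∘ ξ) s := by
        rw [hac.integral_deriv_eq_sub, Function.comp_apply, Function.comp_apply, ← map_sub, hg,
          RCLike.ofReal_real_eq_id, id]
    _ ≤ ∫ s in a..b, ‖deriv ξ s‖ :=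
        integral_mono_ae hab hac.intervalIntegrable_deriv
          (hξ.intervalIntegrable_comp_deriv_s14 (h := fun p => ‖p.2‖) (by fun_prop) a b) hderiv

theorem LipschitzWith.norm_sub_le_half_add_integral_sq (hξ : LipschitzWith K ξ) {a b : ℝ}
    (hab : a ≤ b) : ‖ξ b - ξ a‖ ≤ (b - a) / 2 + (∫ s in a..b, ‖deriv ξ s‖ ^ 2) / 2 := by
  have hsq := hξ.intervalIntegrable_norm_deriv_pow 2 a b
  calc ‖ξ b - ξ a‖ ≤ ∫ s in a..b, ‖deriv ξ s‖ := hξ.norm_sub_le_integral_norm_deriv hab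
    _ ≤ ∫ s in a..b, (1 / 2 + ‖deriv ξ s‖ ^ 2 / 2) :=
        integral_mono_on hab (hξ.intervalIntegrable_comp_deriv_s14 (h := fun p => ‖p.2‖)
          (by fun_prop) a b) (intervalIntegrable_const.add (hsq.div_const 2))
          fun s _ => by nlinarith [sq_nonneg (‖deriv ξ s‖ - 1)]
    _ = (b - a) / 2 + (∫ s in a..b, ‖deriv ξ s‖ ^ 2) / 2 := by
        rw [integral_add intervalIntegrable_const (hsq.div_const 2),
          intervalIntegral.integral_const, intervalIntegral.integral_div, smul_eq_mul]
        ring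

end Curves

section SegmentPath

variable {V : Type*} [NormedAddCommGroup V] [NormedSpace ℝ V] {x y : V} {s : ℝ}

def segmentPath (x y : V) (s : ℝ) : V := x + max 0 (min s 1) • (y - x)

theorem segmentPath_zero : segmentPath x y 0 = x := by simp [segmentPath]

theorem segmentPath_of_one_le (hs : 1 ≤ s) : segmentPath x y s = y := by
  simp [segmentPath, min_eq_right hs]

theorem lipschitzWith_segmentPath : LipschitzWith ‖y - x‖₊ (segmentPath x y) := by
  have hclamp : LipschitzWith 1 (fun s : ℝ => max 0 (min s 1)) :=
    (LipschitzWith.id.min_const 1).const_max 0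
  refine LipschitzWith.of_dist_le_mul fun s u => ?_
  rw [segmentPath, segmentPath, dist_add_left, dist_eq_norm, ← sub_smul, norm_smul, mul_comm,
    coe_nnnorm, ← dist_eq_norm]
  gcongr
  exact (hclamp.dist_le_mul s u).trans_eq (one_mul _)

theorem deriv_segmentPath_of_mem_Ioo (hs : s ∈ Ioo 0 1) : deriv (segmentPath x y) s = y - x := by
  have hev : segmentPath x y =ᶠ[𝓝 s] fun u => x + u • (y - x) := by
    filter_upwards [Ioo_mem_nhds hs.1 hs.2] with u hu
    simp [segmentPath, min_eq_left hu.2.le, max_eq_right hu.1.le]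
  rw [hev.deriv_eq]
  simpa using (((hasDerivAt_id s).smul_const (y - x)).const_add x).deriv

theorem deriv_segmentPath_of_one_lt (hs : 1 < s) : deriv (segmentPath x y) s = 0 := by
  have hev : segmentPath x y =ᶠ[𝓝 s] fun _ => y :=
    eventually_gt_nhds hs |>.mono fun u hu => segmentPath_of_one_le hu.le
  rw [hev.deriv_eq, deriv_const]

end SegmentPath

theorem ContinuousOn.intervalIntegrable_comp_graph {X : Type*} [TopologicalSpace X]
    {c : ℝ → X → ℝ} {a b : ℝ} (hc : ContinuousOn (fun p : ℝ × X => c p.1 p.2) (Icc a b ×ˢ univ))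
    {γ : ℝ → X} (hγ : Continuous γ) (hab : a ≤ b) :
    IntervalIntegrable (fun s => c s (γ s)) volume a b :=
  ContinuousOn.intervalIntegrable <| (uIcc_of_le hab).symm ▸
    hc.comp (continuous_id.prodMk hγ).continuousOn fun _ hs => ⟨hs, mem_univ _⟩

section Variational

variable {n : ℕ} {L : Euc n → Euc n → ℝ} {c : ℝ → Euc n → ℝ} {uf : Euc n → ℝ}
  {C₁ C₂ C₃ C_F δ₀ T : ℝ} {K₀ : Set (Euc n)} {x xT : Euc n} {ξ : ℝ → Euc n} {K : ℝ≥0}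

theorem IsStrictTonelli.intervalIntegrable_lagrangian (hL : IsStrictTonelli L C₁ C₂ C₃)
    (hc : ContinuousOn (fun p : ℝ × Euc n => c p.1 p.2) (Icc 0 T ×ˢ univ))
    (hξ : LipschitzWith K ξ) (hT : 0 ≤ T) :
    IntervalIntegrable (fun s => L (ξ s) (deriv ξ s) + c s (ξ s)) volume 0 T :=
  (hξ.intervalIntegrable_comp_deriv_s14 (h := Function.uncurry L) hL.1.continuous 0 T).add
    (hc.intervalIntegrable_comp_graph hξ.continuous hT)

variable (hL : IsStrictTonelli L C₁ C₂ C₃) (hrev : ∀ x v, L x v = L x (-v))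
include hL hrev

theorem WellCondition.add_sq_add_indicator_le (hwell : WellCondition L c K₀ δ₀ T xT)
    {s : ℝ} (hs : s ∈ Icc 0 T) (y v : Euc n) :
    L xT 0 + c s xT + 1 / (2 * C₁) * ‖v‖ ^ 2 + K₀ᶜ.indicator (fun _ => δ₀) y
      ≤ L y v + c s y := by
  have hv := hL.add_sq_le hrev y v
  by_cases hy : y ∈ K₀
  · rw [indicator_of_notMem (not_not.2 hy)]
    linarith [(hwell.2 s hs).1 y hy]
  · rw [indicator_of_mem hy]
    linarith [(hwell.2 s hs).2 y hy]

theorem WellCondition.integral_add_le_integral_lagrangian (hwell : WellCondition L c K₀ δ₀ T xT)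
    (hc : ContinuousOn (fun p : ℝ × Euc n => c p.1 p.2) (Icc 0 T ×ˢ univ))
    (hK₀ : MeasurableSet K₀) (hξ : LipschitzWith K ξ) (hT : 0 ≤ T) :
    (∫ s in 0..T, (L xT 0 + c s xT)) + 1 / (2 * C₁) * (∫ s in 0..T, ‖deriv ξ s‖ ^ 2)
        + volume.real (ξ ⁻¹' K₀ᶜ ∩ Ioc 0 T) * δ₀
      ≤ ∫ s in 0..T, (L (ξ s) (deriv ξ s) + c s (ξ s)) := by
  have hℓ : IntervalIntegrable (fun s => L xT 0 + c s xT) volume 0 T :=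
    intervalIntegrable_const.add (hc.intervalIntegrable_comp_graph continuous_const hT)
  have hsq : IntervalIntegrable (fun s => 1 / (2 * C₁) * ‖deriv ξ s‖ ^ 2) volume 0 T :=
    (hξ.intervalIntegrable_norm_deriv_pow 2 0 T).const_mul _
  have hmeas : MeasurableSet (ξ ⁻¹' K₀ᶜ) := hK₀.compl.preimage hξ.continuous.measurable
  have hind : IntervalIntegrable (fun s => K₀ᶜ.indicator (fun _ => δ₀) (ξ s)) volume 0 T :=
    intervalIntegrable_const.mono_fun
      ((measurable_const.indicator hK₀.compl).comp hξ.continuous.measurable).aestronglyMeasurable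
      (Eventually.of_forall fun _ => norm_indicator_le_norm_self _ _)
  have hind_eq : ∫ s in 0..T, K₀ᶜ.indicator (fun _ => δ₀) (ξ s)
      = volume.real (ξ ⁻¹' K₀ᶜ ∩ Ioc 0 T) * δ₀ := by
    rw [integral_of_le hT]
    change ∫ s in Ioc 0 T, (ξ ⁻¹' K₀ᶜ).indicator (fun _ => δ₀) s = _
    rw [integral_indicator_const _ hmeas, measureReal_restrict_apply hmeas, smul_eq_mul]
  calc _ = ∫ s in 0..T, (L xT 0 + c s xT + 1 / (2 * C₁) * ‖deriv ξ s‖ ^ 2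
        + K₀ᶜ.indicator (fun _ => δ₀) (ξ s)) := by
        rw [integral_add (hℓ.add hsq) hind, integral_add hℓ hsq,
          intervalIntegral.integral_const_mul, hind_eq]
    _ ≤ _ := integral_mono_on hT ((hℓ.add hsq).add hind)
        (hL.intervalIntegrable_lagrangian hc hξ hT)
        fun s hs => hwell.add_sq_add_indicator_le hL hrev hs _ _

theorem integral_lagrangian_segmentPath_le
    (hc : ContinuousOn (fun p : ℝ × Euc n => c p.1 p.2) (Icc 0 T ×ˢ univ))
    (hcF : ∀ s ∈ Icc (0 : ℝ) T, ∀ z, |c s z| ≤ C_F) (hT : 1 ≤ T) (x y : Euc n) :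
    ∫ s in 0..T, (L (segmentPath x y s) (deriv (segmentPath x y) s) + c s (segmentPath x y s))
      ≤ (∫ s in 0..T, (L y 0 + c s y)) + (2 * (C₃ + C_F) + C₁ / 2 * ‖y - x‖ ^ 2) := by
  have hT0 : (0 : ℝ) ≤ T := zero_le_one.trans hT
  have hf := hL.intervalIntegrable_lagrangian hc (lipschitzWith_segmentPath (x := x) (y := y)) hT0
  have hℓ : IntervalIntegrable (fun s => L y 0 + c s y) volume 0 T :=
    intervalIntegrable_const.add (hc.intervalIntegrable_comp_graph continuous_const hT0)
  have h1 : (1 : ℝ) ∈ uIcc 0 T := by rw [uIcc_of_le hT0]; exact ⟨zero_le_one, hT⟩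
  have hf₁ := hf.mono_set (uIcc_subset_uIcc_left h1)
  have hℓ₁ := hℓ.mono_set (uIcc_subset_uIcc_left h1)
  have hmove : ∫ s in 0..1, (L (segmentPath x y s) (deriv (segmentPath x y) s)
      + c s (segmentPath x y s))
      ≤ ∫ s in 0..1, (L y 0 + c s y + (2 * (C₃ + C_F) + C₁ / 2 * ‖y - x‖ ^ 2)) := by
    refine integral_mono_on_of_le_Ioo zero_le_one hf₁ (hℓ₁.add intervalIntegrable_const)
      fun s hs => ?_
    have hsT : s ∈ Icc 0 T := ⟨hs.1.le, hs.2.le.trans hT⟩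
    rw [deriv_segmentPath_of_mem_Ioo hs]
    obtain ⟨-, hLη⟩ := abs_le.1 (hL.abs_le_at_zero (segmentPath x y s))
    obtain ⟨hLy, -⟩ := abs_le.1 (hL.abs_le_at_zero y)
    obtain ⟨-, hcη⟩ := abs_le.1 (hcF s hsT (segmentPath x y s))
    obtain ⟨hcy, -⟩ := abs_le.1 (hcF s hsT y)
    linarith [hL.le_add_sq hrev (segmentPath x y s) (y - x)]
  have hrest : ∫ s in 1..T, (L (segmentPath x y s) (deriv (segmentPath x y) s)
      + c s (segmentPath x y s)) = ∫ s in 1..T, (L y 0 + c s y) := by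
    refine integral_congr_ae (Eventually.of_forall fun s hs => ?_)
    rw [uIoc_of_le hT] at hs
    rw [deriv_segmentPath_of_one_lt hs.1, segmentPath_of_one_le hs.1.le]
  rw [← integral_add_adjacent_intervals hf₁ (hf.mono_set (uIcc_subset_uIcc_right h1)),
    ← integral_add_adjacent_intervals hℓ₁ (hℓ.mono_set (uIcc_subset_uIcc_right h1)), hrest]
  rw [integral_add hℓ₁ intervalIntegrable_const, intervalIntegral.integral_const, sub_zero,
    one_smul] at hmove
  linarith

theorem IsMinimizer.energy_le (hmin : IsMinimizer L c uf 0 T x ξ)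
    (hwell : WellCondition L c K₀ δ₀ T xT)
    (hc : ContinuousOn (fun p : ℝ × Euc n => c p.1 p.2) (Icc 0 T ×ˢ univ))
    (hcF : ∀ s ∈ Icc (0 : ℝ) T, ∀ z, |c s z| ≤ C_F) (hK₀ : MeasurableSet K₀) (hT : 1 ≤ T) :
    1 / (2 * C₁) * (∫ s in 0..T, ‖deriv ξ s‖ ^ 2) + volume.real (ξ ⁻¹' K₀ᶜ ∩ Ioc 0 T) * δ₀
      ≤ 2 * (C₃ + C_F) + C₁ / 2 * ‖xT - x‖ ^ 2 + uf xT - uf (ξ T) := by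
  obtain ⟨⟨K, hξ⟩, -, hle⟩ := hmin
  have hcompare := hle (segmentPath x xT) ⟨_, lipschitzWith_segmentPath⟩ segmentPath_zero
  rw [action, action, segmentPath_of_one_le hT] at hcompare
  have := hwell.integral_add_le_integral_lagrangian hL hrev hc hK₀ hξ (zero_le_one.trans hT)
  have := integral_lagrangian_segmentPath_le hL hrev hc hcF hT x xT
  linarith

theorem IsMinimizer.norm_le {R₀ M c₀ : ℝ} (hmin : IsMinimizer L c uf 0 T x ξ) (hx : x ∈ K₀)
    (hwell : WellCondition L c K₀ δ₀ T xT)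
    (hc : ContinuousOn (fun p : ℝ × Euc n => c p.1 p.2) (Icc 0 T ×ˢ univ))
    (hcF : ∀ s ∈ Icc (0 : ℝ) T, ∀ z, |c s z| ≤ C_F) (hC₁ : 0 < C₁) (hδ₀ : 0 < δ₀)
    (hK₀ : IsClosed K₀) (hK₀R₀ : K₀ ⊆ closedBall 0 R₀) (hufM : ∀ y ∈ K₀, uf y ≤ M)
    (hufc₀ : ∀ y, -c₀ ≤ uf y) (hT : 1 ≤ T) {t : ℝ} (ht : t ∈ Icc 0 T) :
    ‖ξ t‖ ≤ R₀ + (C₁ + 1 / (2 * δ₀)) * (2 * (C₃ + C_F) + 2 * C₁ * R₀ ^ 2 + M + c₀) := by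
  set A := 2 * (C₃ + C_F) + 2 * C₁ * R₀ ^ 2 + M + c₀
  set E := ξ ⁻¹' K₀ᶜ ∩ Ioc 0 T
  have henergy := hmin.energy_le hL hrev hwell hc hcF hK₀.measurableSet hT
  obtain ⟨⟨K, hξ⟩, hξ0, -⟩ := hmin
  have hxTx : ‖xT - x‖ ^ 2 ≤ 4 * R₀ ^ 2 := by
    have hxT := mem_closedBall_zero_iff.1 (hK₀R₀ hwell.1)
    have hx := mem_closedBall_zero_iff.1 (hK₀R₀ hx)
    nlinarith [norm_sub_le xT x, norm_nonneg (xT - x)]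
  have hbudget : 1 / (2 * C₁) * (∫ s in 0..T, ‖deriv ξ s‖ ^ 2) + volume.real E * δ₀ ≤ A := by
    nlinarith [hufM xT hwell.1, hufc₀ (ξ T)]
  have hsq_nonneg : 0 ≤ ∫ s in 0..T, ‖deriv ξ s‖ ^ 2 :=
    integral_nonneg (zero_le_one.trans hT) fun _ _ => by positivity
  have hkinetic : ∫ s in 0..T, ‖deriv ξ s‖ ^ 2 ≤ 2 * C₁ * A := by
    have : 1 / (2 * C₁) * (∫ s in 0..T, ‖deriv ξ s‖ ^ 2) ≤ A := by
      nlinarith [measureReal_nonneg (μ := volume) (s := E)]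
    rwa [one_div_mul_eq_div, div_le_iff₀ (by positivity), mul_comm] at this
  have hexcursion : volume.real E ≤ A / δ₀ := by
    rw [le_div_iff₀ hδ₀]
    linarith [mul_nonneg (by positivity : (0 : ℝ) ≤ 1 / (2 * C₁)) hsq_nonneg]
  obtain ⟨σ, hσ, hξσ, hesc⟩ := hξ.continuous.exists_last_mem hK₀ (hξ0 ▸ hx) ht.1
  have hσt : t - σ ≤ A / δ₀ := by
    have hsub : Ioc σ t ⊆ E := fun s hs => ⟨hesc hs, hσ.1.trans_lt hs.1, hs.2.trans ht.2⟩
    have hfin : volume E ≠ ⊤ :=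
      ((measure_mono inter_subset_right).trans_lt measure_Ioc_lt_top).ne
    rw [← Real.volume_real_Ioc_of_le hσ.2]
    exact (measureReal_mono hsub hfin).trans hexcursion
  have hsq_mono : ∫ s in σ..t, ‖deriv ξ s‖ ^ 2 ≤ ∫ s in 0..T, ‖deriv ξ s‖ ^ 2 :=
    integral_mono_interval hσ.1 hσ.2 ht.2 (Eventually.of_forall fun _ => by positivity)
      (hξ.intervalIntegrable_norm_deriv_pow 2 0 T)
  calc ‖ξ t‖ ≤ ‖ξ σ‖ + ‖ξ t - ξ σ‖ := norm_le_norm_add_norm_sub' _ _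
    _ ≤ R₀ + ((t - σ) / 2 + (∫ s in σ..t, ‖deriv ξ s‖ ^ 2) / 2) :=
        add_le_add (mem_closedBall_zero_iff.1 (hK₀R₀ hξσ))
          (hξ.norm_sub_le_half_add_integral_sq hσ.2)
    _ ≤ R₀ + (A / δ₀ / 2 + 2 * C₁ * A / 2) := by gcongr; linarith
    _ = R₀ + (C₁ + 1 / (2 * δ₀)) * A := by ring

end Variational

theorem stmt14_general (n : ℕ) (L : Euc n → Euc n → ℝ) (C₁ C₂ C₃ : ℝ)
    (hC₁ : 0 < C₁)
    (hTon : IsStrictTonelli L C₁ C₂ C₃)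
    (hRev : ∀ x v : Euc n, L x v = L x (-v))
    (C_F : ℝ)
    (K₀ : Set (Euc n)) (hK₀c : IsCompact K₀)
    (R₀ : ℝ) (hK₀R₀ : K₀ ⊆ closedBall 0 R₀)
    (δ₀ : ℝ) (hδ₀ : 0 < δ₀)
    (uf : Euc n → ℝ) (Kf : ℝ≥0) (huf : LipschitzWith Kf uf)
    (c₀ : ℝ) (hufge : ∀ x, -c₀ ≤ uf x) :
    ∃ R₁ > (0 : ℝ), ∀ T : ℝ, 1 < T → ∀ c : ℝ → Euc n → ℝ,
      ContinuousOn (fun p : ℝ × Euc n => c p.1 p.2) (Set.Icc 0 T ×ˢ Set.univ) →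
      (∀ s ∈ Set.Icc (0 : ℝ) T, ∀ x, |c s x| ≤ C_F) →
      (∃ xT : Euc n, WellCondition L c K₀ δ₀ T xT) →
      ∀ m₀ : Measure (Euc n), IsProbabilityMeasure m₀ → m₀ K₀ᶜ = 0 →
      ∀ φ : ℝ → Euc n → Euc n,
        (∀ x ∈ K₀, IsMinimizer L c uf 0 T x (fun s => φ s x)) →
        (∀ t ∈ Set.Icc (0 : ℝ) T, Measurable (φ t)) →
        ∀ t ∈ Set.Icc (0 : ℝ) T,
          Measure.map (φ t) m₀ (closedBall (0 : Euc n) R₁)ᶜ = 0 := by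
  obtain ⟨M, hM⟩ := hK₀c.exists_bound_of_continuousOn huf.continuous.continuousOn
  refine ⟨max 1 (R₀ + (C₁ + 1 / (2 * δ₀)) * (2 * (C₃ + C_F) + 2 * C₁ * R₀ ^ 2 + M + c₀)),
    zero_lt_one.trans_le (le_max_left _ _), ?_⟩
  rintro T hT c hc hcF ⟨xT, hwell⟩ m₀ - hm₀ φ hφ hφmeas t ht
  rw [Measure.map_apply (hφmeas t ht) measurableSet_closedBall.compl]
  refine measure_mono_null (fun x hx => ?_) hm₀
  rw [mem_compl_iff]
  intro hxK
  refine hx (mem_closedBall_zero_iff.2 (le_max_of_le_right ?_))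
  exact (hφ x hxK).norm_le hTon hRev hxK hwell hc hcF hC₁ hδ₀ hK₀c.isClosed hK₀R₀
    (fun y hy => (le_abs_self _).trans (hM y hy)) hufge hT.le ht

/-- attainable set from `K₀`: in the time-dependent variational setting,
there is `R₁ > 0`, independent of the horizon `T > 1` and of the coupling `c` (with
`|c| ≤ C_F` and satisfying the uniform well condition), such that for every Borel
probability measure `m₀` supported in `K₀` and every optimal flow
`φ` (i.e. `s ↦ φ s x` is a minimizer from `(0,x)` for each `x ∈ K₀`, and `φ t` is Borel
measurable for each `t ∈ [0,T]`), the pushforward `φ(t,·)♯m₀` is supported in the closed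
ball `B̄_{R₁}` for every `t ∈ [0,T]`. -/
theorem stmt14 (n : ℕ) (hn : 1 ≤ n) (L : Euc n → Euc n → ℝ) (C₁ C₂ C₃ : ℝ)
    (hC₁ : 0 < C₁) (hC₂ : 0 < C₂) (hC₃ : 0 < C₃)
    (hTon : IsStrictTonelli L C₁ C₂ C₃)
    (hRev : ∀ x v : Euc n, L x v = L x (-v))
    (C_F : ℝ) (hCF : 0 ≤ C_F)
    (K₀ : Set (Euc n)) (hK₀c : IsCompact K₀) (hK₀ne : K₀.Nonempty)
    (R₀ : ℝ) (hR₀ : 0 < R₀) (hK₀R₀ : K₀ ⊆ closedBall 0 R₀)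
    (δ₀ : ℝ) (hδ₀ : 0 < δ₀)
    (uf : Euc n → ℝ) (Kf : ℝ≥0) (huf : LipschitzWith Kf uf)
    (c₀ : ℝ) (hc₀ : 0 ≤ c₀) (hufge : ∀ x, -c₀ ≤ uf x) :
    ∃ R₁ > (0 : ℝ), ∀ T : ℝ, 1 < T → ∀ c : ℝ → Euc n → ℝ,
      ContinuousOn (fun p : ℝ × Euc n => c p.1 p.2) (Set.Icc 0 T ×ˢ Set.univ) →
      (∀ s ∈ Set.Icc (0 : ℝ) T, ∀ x, |c s x| ≤ C_F) →
      (∃ xT : Euc n, WellCondition L c K₀ δ₀ T xT) →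
      ∀ m₀ : Measure (Euc n), IsProbabilityMeasure m₀ → m₀ K₀ᶜ = 0 →
      ∀ φ : ℝ → Euc n → Euc n,
        (∀ x ∈ K₀, IsMinimizer L c uf 0 T x (fun s => φ s x)) →
        (∀ t ∈ Set.Icc (0 : ℝ) T, Measurable (φ t)) →
        ∀ t ∈ Set.Icc (0 : ℝ) T,
          Measure.map (φ t) m₀ (closedBall (0 : Euc n) R₁)ᶜ = 0 :=
  stmt14_general n L C₁ C₂ C₃ hC₁ hTon hRev C_F K₀ hK₀c R₀ hK₀R₀ δ₀ hδ₀ uf Kf huf c₀ hufge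
end
end
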